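/- arXiv:1807.04212 — 2 statements merged into one kernel-verified Lean document; each statement's English description precedes it below -/
import Mathlib

section
/- Let (g_{ab}, Ξ, s, L_{ab}, d^a{}_{bcd}) be a solution of the metric conformal Einstein field equations ∇_a∇_bΞ = −ΞL_{ab} + s g_{ab}, ∇_a s = −L_{ac}∇^cΞ, ∇_c L_{db} − ∇_d L_{cb} = ∇_aΞ d^a{}_{bcd}, ∇_a d^a{}_{bcd} = 0 on a connected open set U ⊂ M. Then the scalar function φ ≡ 6Ξs − 3∇_cΞ∇^cΞ is constant on U; in particular, if 6Ξs − 3∇_cΞ∇^cΞ = λ holds at one point of U, it holds on all of U. -/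
/- A coordinate-based formalisation of pseudo-Riemannian geometry on ℝⁿ
   (global chart), used to state results about the conformal Einstein
   field equations. -/

noncomputable section

/-- Points of the manifold (global coordinate chart). -/
abbrev Pt (n : ℕ) : Type := Fin n → ℝ

/-- A metric, given by its matrix of components at each point. -/
abbrev Met (n : ℕ) : Type := Pt n → Matrix (Fin n) (Fin n) ℝ

/-- Partial derivative in the i-th coordinate direction. -/
def pd {n : ℕ} (i : Fin n) (f : Pt n → ℝ) (x : Pt n) : ℝ :=
  fderiv ℝ f x (Pi.single i 1)

/-- Inverse metric g^{ab}. -/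
def ginv {n : ℕ} (g : Met n) (x : Pt n) : Matrix (Fin n) (Fin n) ℝ := (g x)⁻¹

/-- Christoffel symbols Γ^a_{bc} of the Levi-Civita connection of g. -/
def Chr {n : ℕ} (g : Met n) (x : Pt n) (a b c : Fin n) : ℝ :=
  (1/2) * ∑ d : Fin n, ginv g x a d *
    (pd b (fun y => g y d c) x + pd c (fun y => g y b d) x - pd d (fun y => g y b c) x)

/-- Riemann curvature tensor R^a_{bcd}. -/
def Riem {n : ℕ} (g : Met n) (x : Pt n) (a b c d : Fin n) : ℝ :=
  pd c (fun y => Chr g y a d b) x - pd d (fun y => Chr g y a c b) x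
    + ∑ e : Fin n, (Chr g x a c e * Chr g x e d b - Chr g x a d e * Chr g x e c b)

/-- Riemann tensor with all indices lowered, R_{abcd}. -/
def RiemLow {n : ℕ} (g : Met n) (x : Pt n) (a b c d : Fin n) : ℝ :=
  ∑ e : Fin n, g x a e * Riem g x e b c d

/-- Ricci tensor R_{bd}. -/
def RicciT {n : ℕ} (g : Met n) (x : Pt n) (b d : Fin n) : ℝ :=
  ∑ a : Fin n, Riem g x a b a d

/-- Ricci scalar R. -/
def ScalC {n : ℕ} (g : Met n) (x : Pt n) : ℝ :=
  ∑ b : Fin n, ∑ d : Fin n, ginv g x b d * RicciT g x b d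

/-- Covariant derivative of a covector field, (∇_a ω)_b. -/
def covD1 {n : ℕ} (g : Met n) (ω : Pt n → Fin n → ℝ) (x : Pt n) (a b : Fin n) : ℝ :=
  pd a (fun y => ω y b) x - ∑ c : Fin n, Chr g x c a b * ω x c

/-- Covariant derivative of a (0,2)-tensor field, (∇_a T)_{bc}. -/
def covD2 {n : ℕ} (g : Met n) (T : Pt n → Fin n → Fin n → ℝ) (x : Pt n) (a b c : Fin n) : ℝ :=
  pd a (fun y => T y b c) x - ∑ d : Fin n, Chr g x d a b * T x d c
    - ∑ d : Fin n, Chr g x d a c * T x b d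

/-- Covariant derivative of a (0,3)-tensor field, (∇_a T)_{bcd}. -/
def covD3 {n : ℕ} (g : Met n) (T : Pt n → Fin n → Fin n → Fin n → ℝ)
    (x : Pt n) (a b c d : Fin n) : ℝ :=
  pd a (fun y => T y b c d) x - ∑ e : Fin n, Chr g x e a b * T x e c d
    - ∑ e : Fin n, Chr g x e a c * T x b e d - ∑ e : Fin n, Chr g x e a d * T x b c e

/-- Covariant derivative of a (0,4)-tensor field, (∇_a T)_{bcde}. -/
def covD4 {n : ℕ} (g : Met n) (T : Pt n → Fin n → Fin n → Fin n → Fin n → ℝ)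
    (x : Pt n) (a b c d e : Fin n) : ℝ :=
  pd a (fun y => T y b c d e) x - ∑ f : Fin n, Chr g x f a b * T x f c d e
    - ∑ f : Fin n, Chr g x f a c * T x b f d e - ∑ f : Fin n, Chr g x f a d * T x b c f e
    - ∑ f : Fin n, Chr g x f a e * T x b c d f

/-- Covariant derivative of a vector field, ∇_a τ^b. -/
def covDvec {n : ℕ} (g : Met n) (τ : Pt n → Fin n → ℝ) (x : Pt n) (a b : Fin n) : ℝ :=
  pd a (fun y => τ y b) x + ∑ c : Fin n, Chr g x b a c * τ x c

/-- Covariant Hessian ∇_a∇_b f. -/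
def Hess {n : ℕ} (g : Met n) (f : Pt n → ℝ) (x : Pt n) (a b : Fin n) : ℝ :=
  covD1 g (fun y b' => pd b' f y) x a b

/-- Wave operator □f = g^{ab}∇_a∇_b f. -/
def box {n : ℕ} (g : Met n) (f : Pt n → ℝ) (x : Pt n) : ℝ :=
  ∑ a : Fin n, ∑ b : Fin n, ginv g x a b * Hess g f x a b

def SmoothF {n : ℕ} (f : Pt n → ℝ) : Prop := ContDiff ℝ (⊤ : ℕ∞) f
def Smooth1 {n : ℕ} (ω : Pt n → Fin n → ℝ) : Prop := ∀ i, ContDiff ℝ (⊤ : ℕ∞) fun x => ω x i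
def Smooth2 {n : ℕ} (T : Pt n → Fin n → Fin n → ℝ) : Prop :=
  ∀ i j, ContDiff ℝ (⊤ : ℕ∞) fun x => T x i j
def Smooth3 {n : ℕ} (T : Pt n → Fin n → Fin n → Fin n → ℝ) : Prop :=
  ∀ i j k, ContDiff ℝ (⊤ : ℕ∞) fun x => T x i j k
def Smooth4 {n : ℕ} (T : Pt n → Fin n → Fin n → Fin n → Fin n → ℝ) : Prop :=
  ∀ i j k l, ContDiff ℝ (⊤ : ℕ∞) fun x => T x i j k l
def SmoothMet {n : ℕ} (g : Met n) : Prop := ∀ i j, ContDiff ℝ (⊤ : ℕ∞) fun x => g x i j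
def SymmMet {n : ℕ} (g : Met n) : Prop := ∀ x i j, g x i j = g x j i
def InvMet {n : ℕ} (g : Met n) : Prop := ∀ x, IsUnit (g x).det

/-- Schouten tensor in dimension 4: L_{ab} = (1/2)(R_{ab} - (1/6) R g_{ab}). -/
def Schouten (g : Met 4) (x : Pt 4) (a b : Fin 4) : ℝ :=
  (1/2) * (RicciT g x a b - (1/6) * ScalC g x * g x a b)

/-- Schouten tensor in dimension 3: l_{ij} = r_{ij} - (1/4) r ℓ_{ij}. -/
def Schouten3 (g : Met 3) (x : Pt 3) (a b : Fin 3) : ℝ :=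
  RicciT g x a b - (1/4) * ScalC g x * g x a b

/-- Weyl tensor (all indices lowered) in dimension 4:
  C_{abcd} = R_{abcd} - 2(g_{a[c}L_{d]b} - g_{b[c}L_{d]a}). -/
def WeylT (g : Met 4) (x : Pt 4) (a b c d : Fin 4) : ℝ :=
  RiemLow g x a b c d - g x a c * Schouten g x d b + g x a d * Schouten g x c b
    + g x b c * Schouten g x d a - g x b d * Schouten g x c a

/-- Algebraic symmetries of the (lowered) Weyl tensor for a 4-index tensor field:
antisymmetry in each pair, pair-interchange symmetry, first Bianchi identity and
trace-freeness. -/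
def WeylSymm {n : ℕ} (g : Met n) (d : Pt n → Fin n → Fin n → Fin n → Fin n → ℝ) : Prop :=
  (∀ x a b c e, d x a b c e = - d x b a c e) ∧
  (∀ x a b c e, d x a b c e = - d x a b e c) ∧
  (∀ x a b c e, d x a b c e = d x c e a b) ∧
  (∀ x a b c e, d x a b c e + d x a c e b + d x a e b c = 0) ∧
  (∀ x b e, ∑ a : Fin n, ∑ c : Fin n, ginv g x a c * d x a b c e = 0)

/-- Squared norm of the gradient of a scalar field, ∇_cΞ∇^cΞ. -/
def gradSq {n : ℕ} (g : Met n) (Ξ : Pt n → ℝ) (x : Pt n) : ℝ :=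
  ∑ c : Fin n, ∑ e : Fin n, ginv g x c e * pd c Ξ x * pd e Ξ x

/-- Zero-quantity Υ_{ab} = ∇_a∇_bΞ + ΞL_{ab} - s g_{ab}. -/
def UpsQ (g : Met 4) (Ξ s : Pt 4 → ℝ) (L : Pt 4 → Fin 4 → Fin 4 → ℝ)
    (x : Pt 4) (a b : Fin 4) : ℝ :=
  Hess g Ξ x a b + Ξ x * L x a b - s x * g x a b

/-- Zero-quantity Θ_a = ∇_a s + L_{ac}∇^cΞ. -/
def ThetaQ (g : Met 4) (Ξ s : Pt 4 → ℝ) (L : Pt 4 → Fin 4 → Fin 4 → ℝ)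
    (x : Pt 4) (a : Fin 4) : ℝ :=
  pd a s x + ∑ c : Fin 4, ∑ f : Fin 4, L x a c * ginv g x c f * pd f Ξ x

/-- Zero-quantity Δ_{abc} = ∇_aL_{bc} - ∇_bL_{ac} + ∇_eΞ d^e{}_{cab}. -/
def DeltaQ (g : Met 4) (Ξ : Pt 4 → ℝ) (L : Pt 4 → Fin 4 → Fin 4 → ℝ)
    (d : Pt 4 → Fin 4 → Fin 4 → Fin 4 → Fin 4 → ℝ) (x : Pt 4) (a b c : Fin 4) : ℝ :=
  covD2 g L x a b c - covD2 g L x b a c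
    + ∑ e : Fin 4, ∑ f : Fin 4, ginv g x e f * pd e Ξ x * d x f c a b

/-- Zero-quantity Λ_{bcd} = ∇_a d^a{}_{bcd}. -/
def LamQ (g : Met 4) (d : Pt 4 → Fin 4 → Fin 4 → Fin 4 → Fin 4 → ℝ)
    (x : Pt 4) (b c e : Fin 4) : ℝ :=
  ∑ a : Fin 4, ∑ f : Fin 4, ginv g x a f * covD4 g d x a f b c e

/-- The quantity 6Ξs - 3∇_cΞ∇^cΞ appearing in the conformal constraint. -/
def phiQ (g : Met 4) (Ξ s : Pt 4 → ℝ) (x : Pt 4) : ℝ :=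
  6 * Ξ x * s x - 3 * gradSq g Ξ x

theorem pd_congr {n : ℕ} {i : Fin n} {f f' : Pt n → ℝ} (h : ∀ y, f y = f' y) (x : Pt n) :
    pd i f x = pd i f' x := by
  have : f = f' := funext h
  rw [this]

theorem pd_const {n : ℕ} (i : Fin n) (c : ℝ) (x : Pt n) : pd i (fun _ => c) x = 0 := by
  simp [pd]

theorem pd_add {n : ℕ} {i : Fin n} {f h : Pt n → ℝ} {x : Pt n}
    (hf : DifferentiableAt ℝ f x) (hh : DifferentiableAt ℝ h x) :
    pd i (fun y => f y + h y) x = pd i f x + pd i h x := by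
  simp [pd, fderiv_fun_add hf hh]

theorem pd_mul {n : ℕ} {i : Fin n} {f h : Pt n → ℝ} {x : Pt n}
    (hf : DifferentiableAt ℝ f x) (hh : DifferentiableAt ℝ h x) :
    pd i (fun y => f y * h y) x = pd i f x * h x + f x * pd i h x := by
  simp [pd, fderiv_fun_mul hf hh]; ring

theorem pd_sum {n m : ℕ} {i : Fin n} {f : Fin m → Pt n → ℝ} {x : Pt n}
    (hf : ∀ j, DifferentiableAt ℝ (f j) x) :
    pd i (fun y => ∑ j : Fin m, f j y) x = ∑ j : Fin m, pd i (f j) x := by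
  simp [pd, fderiv_fun_sum (fun j _ => hf j)]

theorem pd_neg {n : ℕ} {i : Fin n} {f : Pt n → ℝ} {x : Pt n} :
    pd i (fun y => -f y) x = -pd i f x := by
  simp [pd, fderiv_neg]

theorem pd_sub {n : ℕ} {i : Fin n} {f h : Pt n → ℝ} {x : Pt n}
    (hf : DifferentiableAt ℝ f x) (hh : DifferentiableAt ℝ h x) :
    pd i (fun y => f y - h y) x = pd i f x - pd i h x := by
  simp [pd, fderiv_fun_sub hf hh]

theorem pd_const_mul {n : ℕ} {i : Fin n} {f : Pt n → ℝ} {x : Pt n} (c : ℝ)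
    (hf : DifferentiableAt ℝ f x) :
    pd i (fun y => c * f y) x = c * pd i f x := by
  simp [pd, fderiv_const_mul hf c]

-- smoothness of det / adjugate / ginv entries

theorem contDiff_det {n m : ℕ} {M : Pt n → Matrix (Fin m) (Fin m) ℝ}
    (hM : ∀ i j, ContDiff ℝ (⊤ : ℕ∞) fun x => M x i j) :
    ContDiff ℝ (⊤ : ℕ∞) fun x => (M x).det := by
  simp only [Matrix.det_apply]
  apply ContDiff.sum
  intro σ _
  simp only [Units.smul_def, zsmul_eq_mul]
  exact contDiff_const.mul (contDiff_prod fun i _ => hM (σ i) i)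

theorem contDiff_ginv {n : ℕ} {g : Met n} (hg : SmoothMet g) (hinv : InvMet g) (i j : Fin n) :
    ContDiff ℝ (⊤ : ℕ∞) fun x => ginv g x i j := by
  have hadj : ContDiff ℝ (⊤ : ℕ∞) fun x => (g x).adjugate i j := by
    simp only [Matrix.adjugate_apply]
    apply contDiff_det
    intro k l
    by_cases h : k = j
    · simp only [Matrix.updateRow_apply, h, if_true]
      exact contDiff_const
    · simp only [Matrix.updateRow_apply, h, if_false]
      exact hg k l
  have hdet : ContDiff ℝ (⊤ : ℕ∞) fun x => (g x).det := contDiff_det hg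
  have hne : ∀ x, (g x).det ≠ 0 := fun x => (hinv x).ne_zero
  have : (fun x => ginv g x i j) = fun x => ((g x).det)⁻¹ * (g x).adjugate i j := by
    funext x
    rw [ginv, Matrix.inv_def]
    simp [Ring.inverse_eq_inv', Matrix.smul_apply, smul_eq_mul]
  rw [this]
  exact (hdet.inv hne).mul hadj

theorem pd_ginv {n : ℕ} {g : Met n} (hg : SmoothMet g) (hinv : InvMet g)
    (a c m : Fin n) (x : Pt n) :
    pd a (fun y => ginv g y c m) x
      = -∑ p : Fin n, ∑ q : Fin n, ginv g x c p * pd a (fun y => g y p q) x * ginv g x q m := by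
  have dgi : ∀ i j (y : Pt n), DifferentiableAt ℝ (fun z => ginv g z i j) y :=
    fun i j y => ((contDiff_ginv hg hinv i j).differentiable (by simp)).differentiableAt
  have dg : ∀ i j (y : Pt n), DifferentiableAt ℝ (fun z => g z i j) y :=
    fun i j y => ((hg i j).differentiable (by simp)).differentiableAt
  have He : ∀ e, ∑ k : Fin n, pd a (fun y => ginv g y c k) x * g x k e
      = -∑ k : Fin n, ginv g x c k * pd a (fun y => g y k e) x := by
    intro e
    have h0 : pd a (fun y => ∑ k : Fin n, ginv g y c k * g y k e) x = 0 := by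
      have hcongr : ∀ y : Pt n, (∑ k : Fin n, ginv g y c k * g y k e)
          = (if c = e then (1:ℝ) else 0) := by
        intro y
        have h1 := congrFun (congrFun (Matrix.nonsing_inv_mul (g y) (hinv y)) c) e
        simpa [ginv, Matrix.mul_apply, Matrix.one_apply] using h1
      rw [pd_congr hcongr, pd_const]
    rw [pd_sum (fun k => (dgi c k x).fun_mul (dg k e x))] at h0
    have h2 : ∀ k ∈ Finset.univ, pd a (fun y => ginv g y c k * g y k e) x
        = pd a (fun y => ginv g y c k) x * g x k e
          + ginv g x c k * pd a (fun y => g y k e) x :=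
      fun k _ => pd_mul (dgi c k x) (dg k e x)
    rw [Finset.sum_congr rfl h2, Finset.sum_add_distrib] at h0
    linarith
  have Hid : ∀ k, ∑ e : Fin n, g x k e * ginv g x e m = if k = m then (1:ℝ) else 0 := by
    intro k
    have h1 := congrFun (congrFun (Matrix.mul_nonsing_inv (g x) (hinv x)) k) m
    simpa [ginv, Matrix.mul_apply, Matrix.one_apply] using h1
  calc pd a (fun y => ginv g y c m) x
      = ∑ k : Fin n, pd a (fun y => ginv g y c k) x * (if k = m then (1:ℝ) else 0) := by
        simp [Finset.sum_ite_eq', mul_ite]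
    _ = ∑ k : Fin n, pd a (fun y => ginv g y c k) x * ∑ e : Fin n, g x k e * ginv g x e m := by
        simp_rw [Hid]
    _ = ∑ e : Fin n, (∑ k : Fin n, pd a (fun y => ginv g y c k) x * g x k e) * ginv g x e m := by
        simp_rw [Finset.mul_sum, Finset.sum_mul]
        rw [Finset.sum_comm]
        simp_rw [mul_assoc]
    _ = ∑ e : Fin n, (-∑ k : Fin n, ginv g x c k * pd a (fun y => g y k e) x) * ginv g x e m := by
        simp_rw [He]
    _ = -∑ p : Fin n, ∑ q : Fin n, ginv g x c p * pd a (fun y => g y p q) x * ginv g x q m := by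
        simp only [neg_mul, Finset.sum_mul, ← Finset.sum_neg_distrib]
        exact Finset.sum_comm ..

theorem ginv_symm {n : ℕ} {g : Met n} (hsym : SymmMet g) (x : Pt n) (i j : Fin n) :
    ginv g x i j = ginv g x j i := by
  have ht : (g x).transpose = g x := Matrix.ext fun i j => hsym x j i
  have h2 : ((g x)⁻¹).transpose = (g x)⁻¹ := by rw [Matrix.transpose_nonsing_inv, ht]
  have := congrFun (congrFun h2 i) j
  simpa [Matrix.transpose_apply, ginv] using this.symm

set_option maxHeartbeats 2000000 in
theorem metric_compat {g : Met 4} (hg : SmoothMet g) (hsym : SymmMet g) (hinv : InvMet g)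
    (a c e : Fin 4) (x : Pt 4) :
    pd a (fun y => ginv g y c e) x
      = -∑ f : Fin 4, (Chr g x c a f * ginv g x f e + Chr g x e a f * ginv g x c f) := by
  have gS : ∀ (k i j : Fin 4), pd k (fun y => g y i j) x = pd k (fun y => g y j i) x :=
    fun k i j => pd_congr (fun y => hsym y i j) x
  have GS := ginv_symm hsym x
  rw [pd_ginv hg hinv]
  simp only [Chr, Fin.sum_univ_four]
  simp only [show ∀ k : Fin 4, pd k (fun y => g y (1:Fin 4) 0) x = pd k (fun y => g y 0 1) x from fun k => gS k 1 0,
    show ∀ k : Fin 4, pd k (fun y => g y (2:Fin 4) 0) x = pd k (fun y => g y 0 2) x from fun k => gS k 2 0,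
    show ∀ k : Fin 4, pd k (fun y => g y (3:Fin 4) 0) x = pd k (fun y => g y 0 3) x from fun k => gS k 3 0,
    show ∀ k : Fin 4, pd k (fun y => g y (2:Fin 4) 1) x = pd k (fun y => g y 1 2) x from fun k => gS k 2 1,
    show ∀ k : Fin 4, pd k (fun y => g y (3:Fin 4) 1) x = pd k (fun y => g y 1 3) x from fun k => gS k 3 1,
    show ∀ k : Fin 4, pd k (fun y => g y (3:Fin 4) 2) x = pd k (fun y => g y 2 3) x from fun k => gS k 3 2,
    show ginv g x (1:Fin 4) 0 = ginv g x 0 1 from GS 1 0,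
    show ginv g x (2:Fin 4) 0 = ginv g x 0 2 from GS 2 0,
    show ginv g x (3:Fin 4) 0 = ginv g x 0 3 from GS 3 0,
    show ginv g x (2:Fin 4) 1 = ginv g x 1 2 from GS 2 1,
    show ginv g x (3:Fin 4) 1 = ginv g x 1 3 from GS 3 1,
    show ginv g x (3:Fin 4) 2 = ginv g x 2 3 from GS 3 2,
    show ginv g x (0:Fin 4) c = ginv g x c 0 from GS 0 c,
    show ginv g x (1:Fin 4) c = ginv g x c 1 from GS 1 c,
    show ginv g x (2:Fin 4) c = ginv g x c 2 from GS 2 c,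
    show ginv g x (3:Fin 4) c = ginv g x c 3 from GS 3 c,
    show ginv g x (0:Fin 4) e = ginv g x e 0 from GS 0 e,
    show ginv g x (1:Fin 4) e = ginv g x e 1 from GS 1 e,
    show ginv g x (2:Fin 4) e = ginv g x e 2 from GS 2 e,
    show ginv g x (3:Fin 4) e = ginv g x e 3 from GS 3 e]
  ring

theorem contDiff_pdXi {n : ℕ} {Ξ : Pt n → ℝ} (hΞ : SmoothF Ξ) (c : Fin n) :
    ContDiff ℝ (⊤ : ℕ∞) fun y => pd c Ξ y := by
  have h := (hΞ.fderiv_right (m := (⊤ : ℕ∞)) (by simp)).clm_apply (contDiff_const (c := (Pi.single c 1 : Pt n)))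
  unfold pd
  exact h

theorem contDiff_gradSq {n : ℕ} {g : Met n} {Ξ : Pt n → ℝ}
    (hg : SmoothMet g) (hinv : InvMet g) (hΞ : SmoothF Ξ) :
    ContDiff ℝ (⊤ : ℕ∞) fun x => gradSq g Ξ x := by
  unfold gradSq
  apply ContDiff.sum; intro c _
  apply ContDiff.sum; intro e _
  exact ((contDiff_ginv hg hinv c e).mul (contDiff_pdXi hΞ c)).mul (contDiff_pdXi hΞ e)

theorem contDiff_phi {g : Met 4} {Ξ s : Pt 4 → ℝ}
    (hg : SmoothMet g) (hinv : InvMet g) (hΞ : SmoothF Ξ) (hs : SmoothF s) :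
    ContDiff ℝ (⊤ : ℕ∞) fun x => phiQ g Ξ s x := by
  unfold phiQ
  exact ((contDiff_const.mul hΞ).mul hs).sub
    (contDiff_const.mul (contDiff_gradSq hg hinv hΞ))

theorem pd_pdXi {n : ℕ} (g : Met n) (Ξ : Pt n → ℝ) (x : Pt n) (a c : Fin n) :
    pd a (fun y => pd c Ξ y) x = Hess g Ξ x a c + ∑ f : Fin n, Chr g x f a c * pd f Ξ x := by
  simp [Hess, covD1]

theorem proj_lemma {n : ℕ} {g : Met n} (hinv : InvMet g) (Ξ : Pt n → ℝ) (x : Pt n) (a : Fin n) :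
    ∑ e : Fin n, (∑ c : Fin n, g x a c * ginv g x c e) * pd e Ξ x = pd a Ξ x := by
  have h1 : ∀ e, ∑ c : Fin n, g x a c * ginv g x c e = if e = a then (1:ℝ) else 0 := by
    intro e
    have h2 := congrFun (congrFun (Matrix.mul_nonsing_inv (g x) (hinv x)) a) e
    simp only [ginv, Matrix.mul_apply, Matrix.one_apply] at h2 ⊢
    rw [h2]
    simp [eq_comm]
  simp_rw [h1]
  simp

set_option maxHeartbeats 2000000 in
theorem pd_gradSq_eq {g : Met 4} {Ξ s : Pt 4 → ℝ} {L : Pt 4 → Fin 4 → Fin 4 → ℝ}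
    (hg : SmoothMet g) (hsym : SymmMet g) (hinv : InvMet g) (hΞ : SmoothF Ξ)
    (x : Pt 4) (a : Fin 4)
    (h1 : ∀ a b, Hess g Ξ x a b = -(Ξ x) * L x a b + s x * g x a b)
    (h2 : pd a s x = -∑ c : Fin 4, ∑ f : Fin 4, L x a c * ginv g x c f * pd f Ξ x) :
    pd a (fun y => gradSq g Ξ y) x = 2 * (Ξ x * pd a s x + s x * pd a Ξ x) := by
  have dG : ∀ i j (y : Pt 4), DifferentiableAt ℝ (fun z => ginv g z i j) y :=
    fun i j y => ((contDiff_ginv hg hinv i j).differentiable (by simp)).differentiableAt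
  have dP : ∀ i (y : Pt 4), DifferentiableAt ℝ (fun z => pd i Ξ z) y :=
    fun i y => ((contDiff_pdXi hΞ i).differentiable (by simp)).differentiableAt
  have dGP : ∀ c e (y : Pt 4), DifferentiableAt ℝ (fun z => ginv g z c e * pd c Ξ z) y :=
    fun c e y => (dG c e y).mul (dP c y)
  have dGPP : ∀ c e (y : Pt 4),
      DifferentiableAt ℝ (fun z => ginv g z c e * pd c Ξ z * pd e Ξ z) y :=
    fun c e y => (dGP c e y).mul (dP e y)
  have hH : ∀ c, pd a (fun y => pd c Ξ y) x
      = -(Ξ x) * L x a c + s x * g x a c + ∑ f : Fin 4, Chr g x f a c * pd f Ξ x := by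
    intro c
    rw [pd_pdXi, h1]
  have e1 : pd a (fun y => gradSq g Ξ y) x
      = ∑ c : Fin 4, ∑ e : Fin 4, pd a (fun y => ginv g y c e * pd c Ξ y * pd e Ξ y) x := by
    unfold gradSq
    rw [pd_sum (fun c => DifferentiableAt.fun_sum (fun e _ => dGPP c e x))]
    exact Finset.sum_congr rfl fun c _ => pd_sum (fun e => dGPP c e x)
  have e2 : ∀ c e : Fin 4, pd a (fun y => ginv g y c e * pd c Ξ y * pd e Ξ y) x
      = (-∑ f : Fin 4, (Chr g x c a f * ginv g x f e + Chr g x e a f * ginv g x c f))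
          * pd c Ξ x * pd e Ξ x
        + ginv g x c e * (-(Ξ x) * L x a c + s x * g x a c
            + ∑ f : Fin 4, Chr g x f a c * pd f Ξ x) * pd e Ξ x
        + ginv g x c e * pd c Ξ x * (-(Ξ x) * L x a e + s x * g x a e
            + ∑ f : Fin 4, Chr g x f a e * pd f Ξ x) := by
    intro c e
    rw [pd_mul (dGP c e x) (dP e x), pd_mul (dG c e x) (dP c x),
      metric_compat hg hsym hinv, hH c, hH e]
    ring
  have GS := ginv_symm hsym x
  have key : (∑ c : Fin 4, ∑ e : Fin 4,
      ((-∑ f : Fin 4, (Chr g x c a f * ginv g x f e + Chr g x e a f * ginv g x c f))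
          * pd c Ξ x * pd e Ξ x
        + ginv g x c e * (-(Ξ x) * L x a c + s x * g x a c
            + ∑ f : Fin 4, Chr g x f a c * pd f Ξ x) * pd e Ξ x
        + ginv g x c e * pd c Ξ x * (-(Ξ x) * L x a e + s x * g x a e
            + ∑ f : Fin 4, Chr g x f a e * pd f Ξ x)))
      = -(2 * Ξ x) * (∑ c : Fin 4, ∑ f : Fin 4, L x a c * ginv g x c f * pd f Ξ x)
        + (2 * s x) * (∑ e : Fin 4, (∑ c : Fin 4, g x a c * ginv g x c e) * pd e Ξ x) := by
    simp only [Fin.sum_univ_four,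
      show ginv g x (1:Fin 4) 0 = ginv g x 0 1 from GS 1 0,
      show ginv g x (2:Fin 4) 0 = ginv g x 0 2 from GS 2 0,
      show ginv g x (3:Fin 4) 0 = ginv g x 0 3 from GS 3 0,
      show ginv g x (2:Fin 4) 1 = ginv g x 1 2 from GS 2 1,
      show ginv g x (3:Fin 4) 1 = ginv g x 1 3 from GS 3 1,
      show ginv g x (3:Fin 4) 2 = ginv g x 2 3 from GS 3 2]
    ring
  rw [e1, Finset.sum_congr rfl fun c _ => Finset.sum_congr rfl fun e _ => e2 c e, key,
    proj_lemma hinv]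
  have h2' : ∑ c : Fin 4, ∑ f : Fin 4, L x a c * ginv g x c f * pd f Ξ x = -pd a s x := by
    rw [h2]; ring
  rw [h2']
  ring

theorem pd_phi_zero {g : Met 4} {Ξ s : Pt 4 → ℝ} {L : Pt 4 → Fin 4 → Fin 4 → ℝ}
    (hg : SmoothMet g) (hsym : SymmMet g) (hinv : InvMet g) (hΞ : SmoothF Ξ) (hs : SmoothF s)
    (x : Pt 4) (a : Fin 4)
    (h1 : ∀ a b, Hess g Ξ x a b = -(Ξ x) * L x a b + s x * g x a b)
    (h2 : pd a s x = -∑ c : Fin 4, ∑ f : Fin 4, L x a c * ginv g x c f * pd f Ξ x) :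
    pd a (fun y => phiQ g Ξ s y) x = 0 := by
  have dΞ : DifferentiableAt ℝ Ξ x := (hΞ.differentiable (by simp)).differentiableAt
  have ds : DifferentiableAt ℝ s x := (hs.differentiable (by simp)).differentiableAt
  have dgr : DifferentiableAt ℝ (fun y => gradSq g Ξ y) x :=
    ((contDiff_gradSq hg hinv hΞ).differentiable (by simp)).differentiableAt
  have step : pd a (fun y => phiQ g Ξ s y) x
      = (6 * pd a Ξ x * s x + 6 * Ξ x * pd a s x) - 3 * pd a (fun y => gradSq g Ξ y) x := by
    unfold phiQ
    rw [pd_sub ((differentiableAt_const _).fun_mul dΞ |>.fun_mul ds)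
      ((differentiableAt_const _).fun_mul dgr)]
    rw [pd_const_mul 3 dgr]
    rw [show (fun y => 6 * Ξ y * s y) = fun y => (6 * Ξ y) * s y from rfl,
      pd_mul ((differentiableAt_const _).fun_mul dΞ) ds, pd_const_mul 6 dΞ]
  rw [step, pd_gradSq_eq hg hsym hinv hΞ x a h1 h2]
  ring

theorem IsConnected.phi_const {g : Met 4} {Ξ s : Pt 4 → ℝ} {L : Pt 4 → Fin 4 → Fin 4 → ℝ}
    {U : Set (Pt 4)}
    (hU : IsOpen U) (hUconn : IsConnected U)
    (hg : SmoothMet g) (hsym : SymmMet g) (hinv : InvMet g)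
    (hΞ : SmoothF Ξ) (hs : SmoothF s)
    (h1 : ∀ x ∈ U, ∀ a b, Hess g Ξ x a b = -(Ξ x) * L x a b + s x * g x a b)
    (h2 : ∀ x ∈ U, ∀ a, pd a s x
      = -∑ c : Fin 4, ∑ f : Fin 4, L x a c * ginv g x c f * pd f Ξ x) :
    ∀ x ∈ U, ∀ y ∈ U, phiQ g Ξ s x = phiQ g Ξ s y := by
  have hphi : ContDiff ℝ (⊤ : ℕ∞) fun y => phiQ g Ξ s y := contDiff_phi hg hinv hΞ hs
  have hfd : ∀ x ∈ U, fderiv ℝ (fun y => phiQ g Ξ s y) x = 0 := by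
    intro x hx
    apply ContinuousLinearMap.ext
    intro v
    have hv : v = ∑ a : Fin 4, v a • (Pi.single a 1 : Pt 4) := by
      ext j; simp [Pi.single_apply]
    rw [hv]
    have hz : ∀ a : Fin 4, fderiv ℝ (fun y => phiQ g Ξ s y) x (Pi.single a 1) = 0 :=
      fun a => pd_phi_zero hg hsym hinv hΞ hs x a (h1 x hx) (h2 x hx a)
    simp [map_sum, map_smul, hz]
  have hconst : ∀ x ∈ U, ∃ ε > 0, Metric.ball x ε ⊆ U ∧
      ∀ y ∈ Metric.ball x ε, phiQ g Ξ s y = phiQ g Ξ s x := by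
    intro x hx
    obtain ⟨ε, hε, hball⟩ := Metric.isOpen_iff.mp hU x hx
    refine ⟨ε, hε, hball, fun y hy => ?_⟩
    exact Convex.is_const_of_fderivWithin_eq_zero (convex_ball x ε)
      ((hphi.differentiable (by simp)).differentiableOn)
      (fun z hz => by
        rw [fderivWithin_of_isOpen Metric.isOpen_ball hz]
        exact hfd z (hball hz))
      hy (Metric.mem_ball_self hε)
  intro p hp y hy
  set A := {z : Pt 4 | z ∈ U ∧ phiQ g Ξ s z = phiQ g Ξ s p} with hA
  set B := {z : Pt 4 | z ∈ U ∧ phiQ g Ξ s z ≠ phiQ g Ξ s p} with hB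
  have hAopen : IsOpen A := by
    rw [Metric.isOpen_iff]
    rintro z ⟨hzU, hzv⟩
    obtain ⟨ε, hε, hball, hc⟩ := hconst z hzU
    exact ⟨ε, hε, fun w hw => ⟨hball hw, by rw [hc w hw, hzv]⟩⟩
  have hBopen : IsOpen B := by
    rw [Metric.isOpen_iff]
    rintro z ⟨hzU, hzv⟩
    obtain ⟨ε, hε, hball, hc⟩ := hconst z hzU
    exact ⟨ε, hε, fun w hw => ⟨hball hw, by rw [hc w hw]; exact hzv⟩⟩
  have hdisj : Disjoint A B := by
    rw [Set.disjoint_left]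
    rintro z ⟨_, hz⟩ ⟨_, hz'⟩
    exact hz' hz
  have hcover : U ⊆ A ∪ B := by
    intro z hz
    by_cases h : phiQ g Ξ s z = phiQ g Ξ s p
    · exact Or.inl ⟨hz, h⟩
    · exact Or.inr ⟨hz, h⟩
  have hsub : U ⊆ A :=
    hUconn.isPreconnected.subset_left_of_subset_union hAopen hBopen hdisj hcover
      ⟨p, hp, hp, rfl⟩
  exact ((hsub hy).2).symm

/-- for a solution of the metric conformal Einstein field equations
on a connected open set U, the scalar 6Ξs - 3∇_cΞ∇^cΞ is constant on U; in
particular if it equals λ at one point of U it equals λ on all of U. -/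
theorem constancy_of_conformal_constraint
    (g : Met 4) (Ξ s : Pt 4 → ℝ) (L : Pt 4 → Fin 4 → Fin 4 → ℝ)
    (d : Pt 4 → Fin 4 → Fin 4 → Fin 4 → Fin 4 → ℝ)
    (U : Set (Pt 4)) (lam : ℝ)
    (hU : IsOpen U) (hUconn : IsConnected U)
    (hg : SmoothMet g) (hsym : SymmMet g) (hinv : InvMet g)
    (hΞ : SmoothF Ξ) (hs : SmoothF s) (hL : Smooth2 L) (hd : Smooth4 d)
    (hLsym : ∀ x a b, L x a b = L x b a) (hdW : WeylSymm g d)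
    (hCFE1 : ∀ x ∈ U, ∀ a b, Hess g Ξ x a b = -(Ξ x) * L x a b + s x * g x a b)
    (hCFE2 : ∀ x ∈ U, ∀ a, pd a s x =
      -∑ c : Fin 4, ∑ f : Fin 4, L x a c * ginv g x c f * pd f Ξ x)
    (hCFE3 : ∀ x ∈ U, ∀ c e b, covD2 g L x c e b - covD2 g L x e c b =
      ∑ a : Fin 4, ∑ f : Fin 4, ginv g x a f * pd a Ξ x * d x f b c e)
    (hCFE4 : ∀ x ∈ U, ∀ b c e, LamQ g d x b c e = 0) :
    (∀ x ∈ U, ∀ y ∈ U, phiQ g Ξ s x = phiQ g Ξ s y) ∧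
    ((∃ p ∈ U, phiQ g Ξ s p = lam) → ∀ x ∈ U, phiQ g Ξ s x = lam) := by
  refine ⟨IsConnected.phi_const hU hUconn hg hsym hinv hΞ hs hCFE1 hCFE2, ?_⟩
  rintro ⟨p, hp, hpl⟩ x hx
  rw [← hpl]
  exact IsConnected.phi_const hU hUconn hg hsym hinv hΞ hs hCFE1 hCFE2 x hx p hp
end
end

section
/- Let 𝒯 be a timelike hypersurface of a spacetime (M,g) with intrinsic Lorentzian metric ℓ and connection D̸, and let Ω be a smooth function on 𝒯 satisfying D̸_i D̸_j Ω = −Ω(l̸_{ij} − (1/2)κ²ℓ_{ij}) and κ D̸_iΩ = Ω D̸_iκ for a smooth function κ. If Ω = 0 on a spacelike Cauchy hypersurface C_⋆ of 𝒯 and κ ≠ 0 on C_⋆, then Ω vanishes identically on the domain of dependence of C_⋆ in 𝒯. -/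
/- A coordinate-based formalisation of pseudo-Riemannian geometry on ℝⁿ
   (global chart), used to state results about the conformal Einstein
   field equations. -/

noncomputable section

/-- an Ω on a timelike hypersurface (with intrinsic Lorentzian
3-metric ℓ) satisfying D_iD_jΩ = -Ω(l_{ij} - (1/2)κ²ℓ_{ij}) and κD_iΩ = ΩD_iκ,
vanishing on a spacelike Cauchy hypersurface C⋆ = {x⁰ = 0} on which κ ≠ 0,
vanishes identically on the domain of dependence D of C⋆.  Uniqueness for the
induced linear wave equation with vanishing Cauchy data is assumed available
(hypothesis `huniq`). -/
theorem vanishing_conformal_factor_on_boundary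
    (ℓ : Met 3) (Ω κ : Pt 3 → ℝ) (D : Set (Pt 3))
    (hℓ : SmoothMet ℓ) (hsym : SymmMet ℓ) (hinv : InvMet ℓ)
    (hΩ : SmoothF Ω) (hκ : SmoothF κ)
    (hEq1 : ∀ x a b, Hess ℓ Ω x a b
      = -(Ω x) * (Schouten3 ℓ x a b - (1/2) * (κ x)^2 * ℓ x a b))
    (hEq2 : ∀ x a, κ x * pd a Ω x = Ω x * pd a κ x)
    (hC : ∀ x : Pt 3, x 0 = 0 → Ω x = 0)
    (hκne : ∀ x : Pt 3, x 0 = 0 → κ x ≠ 0)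
    (huniq : ∀ u : Pt 3 → ℝ, ContDiff ℝ (⊤ : ℕ∞) u →
      (∀ x, box ℓ u x = -(1/4) * (ScalC ℓ x - 6 * (κ x)^2) * u x) →
      (∀ x : Pt 3, x 0 = 0 → u x = 0 ∧ ∀ a, pd a u x = 0) →
      ∀ x ∈ D, u x = 0) :
    ∀ x ∈ D, Ω x = 0 := by
  refine huniq Ω hΩ ?_ ?_
  · intro y
    have htr : ∑ a : Fin 3, ∑ b : Fin 3, ginv ℓ y a b * ℓ y a b = 3 := by
      have h := Matrix.nonsing_inv_mul (ℓ y) (hinv y)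
      have h2 := congrArg Matrix.trace h
      rw [Matrix.trace_one] at h2
      have h3 : Matrix.trace ((ℓ y)⁻¹ * ℓ y)
          = ∑ a : Fin 3, ∑ b : Fin 3, ginv ℓ y a b * ℓ y a b := by
        simp only [Matrix.trace, Matrix.diag, Matrix.mul_apply, ginv]
        exact Finset.sum_congr rfl fun a _ => Finset.sum_congr rfl fun b _ => by
          rw [hsym y b a]
      rw [h3] at h2
      rw [h2]
      norm_num
    have key : ∀ a b : Fin 3, ginv ℓ y a b * Hess ℓ Ω y a b =
        -(Ω y) * (ginv ℓ y a b * RicciT ℓ y a b)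
        + (Ω y) * ((1/4) * ScalC ℓ y + (1/2) * (κ y)^2) * (ginv ℓ y a b * ℓ y a b) := by
      intro a b
      rw [hEq1]
      unfold Schouten3
      ring
    have hbox : box ℓ Ω y = -(Ω y) * (∑ a : Fin 3, ∑ b : Fin 3, ginv ℓ y a b * RicciT ℓ y a b)
        + (Ω y) * ((1/4) * ScalC ℓ y + (1/2) * (κ y)^2)
          * (∑ a : Fin 3, ∑ b : Fin 3, ginv ℓ y a b * ℓ y a b) := by
      unfold box
      simp only [Finset.mul_sum, ← Finset.sum_add_distrib]
      exact Finset.sum_congr rfl fun a _ => Finset.sum_congr rfl fun b _ => key a b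
    have hS : (∑ a : Fin 3, ∑ b : Fin 3, ginv ℓ y a b * RicciT ℓ y a b) = ScalC ℓ y := rfl
    rw [hbox, hS, htr]
    ring
  · intro y hy
    refine ⟨hC y hy, fun a => ?_⟩
    have h2 := hEq2 y a
    rw [hC y hy, zero_mul] at h2
    exact (mul_eq_zero.mp h2).resolve_left (hκne y hy)
end
end
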